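/- Let G' = (V',E') be a finite simple graph, r a positive integer, G = G(G',r) the gadget graph, X = A₁ ∪ A₂ ∪ B, and γ_r = (r²+r−1)/(2r²+2r−1). If M ⊆ V' is nonempty with |M| < r, then X ∪ M is not a γ_r-quasi-clique in G (some vertex of M has degree at most r²+|M|−1 in G[X ∪ M], which is strictly below the required threshold ⌈γ_r·(2r²+r+|M|−1)⌉). -/

import Mathlib

open SimpleGraph Set

/-- Vertex type of the gadget graph: the original vertices `V`, plus
`A₁` and `A₂` (each of size `r²`) and `B` (of size `r`). -/
abbrev GadgetV (V : Type*) (r : ℕ) : Type _ := V ⊕ (Fin (r ^ 2) ⊕ Fin (r ^ 2) ⊕ Fin r)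

/-- Membership in `A₁`. -/
def isA1 {V : Type*} {r : ℕ} : GadgetV V r → Prop
  | Sum.inr (Sum.inl _) => True
  | _ => False

/-- Membership in `A₂`. -/
def isA2 {V : Type*} {r : ℕ} : GadgetV V r → Prop
  | Sum.inr (Sum.inr (Sum.inl _)) => True
  | _ => False

/-- Membership in `B`. -/
def isB {V : Type*} {r : ℕ} : GadgetV V r → Prop
  | Sum.inr (Sum.inr (Sum.inr _)) => True
  | _ => False

/-- The gadget graph `G(G',r)`: all edges of `G'`, `A₁`, `A₂`, `B` are cliques,
all pairs between `A₁` and `A₂`, between `A₁` and `B`, and between `A₁` and `V'`.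
(A vertex of `A₁` is adjacent to every other vertex.) -/
def gadget {V : Type*} (G' : SimpleGraph V) (r : ℕ) : SimpleGraph (GadgetV V r) :=
  SimpleGraph.fromRel fun a b =>
    isA1 a ∨ (∃ u v, a = Sum.inl u ∧ b = Sum.inl v ∧ G'.Adj u v) ∨
      (isA2 a ∧ isA2 b) ∨ (isB a ∧ isB b)

/-- The set `X = A₁ ∪ A₂ ∪ B`. -/
def Xset (V : Type*) (r : ℕ) : Set (GadgetV V r) := {x | isA1 x ∨ isA2 x ∨ isB x}

/-- Degree of a vertex `v` in the subgraph of `G` induced on `Q`: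
the number of neighbors of `v` lying in `Q`. -/
noncomputable def degIn {W : Type*} (G : SimpleGraph W) (Q : Set W) (v : W) : ℕ :=
  (Q ∩ G.neighborSet v).ncard

/-- `Q` is a `γ`-quasi-clique in `G`: the induced subgraph `G[Q]` is connected and
every vertex of `Q` has degree at least `⌈γ·(|Q|-1)⌉` in `G[Q]`. -/
def IsQuasiClique {W : Type*} (G : SimpleGraph W) (γ : ℚ) (Q : Set W) : Prop :=
  (G.induce Q).Connected ∧ ∀ v ∈ Q, ⌈γ * ((Q.ncard : ℚ) - 1)⌉ ≤ (degIn G Q v : ℤ)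

/-- `γ_r = (r²+r−1)/(2r²+2r−1)`. -/
def gammaR (r : ℕ) : ℚ := ((r : ℚ) ^ 2 + r - 1) / (2 * (r : ℚ) ^ 2 + 2 * r - 1)

lemma Xset_eq_range (V : Type*) (r : ℕ) : Xset V r = Set.range Sum.inr := by
  ext (u | x | x | x) <;> simp [Xset, isA1, isA2, isB]

lemma ncard_Xset (V : Type*) (r : ℕ) : (Xset V r).ncard = 2 * r ^ 2 + r := by
  rw [Xset_eq_range, ← Set.image_univ, Set.ncard_image_of_injective _ Sum.inr_injective,
    Set.ncard_univ, Nat.card_eq_fintype_card]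
  simp only [Fintype.card_sum, Fintype.card_fin]
  ring

lemma ncard_Xset_union_image_inl {V : Type*} (r : ℕ) {M : Set V} (hM : M.Finite) :
    (Xset V r ∪ Sum.inl '' M).ncard = 2 * r ^ 2 + r + M.ncard := by
  have hdisj : Disjoint (Xset V r) (Sum.inl '' M) := by
    rw [Xset_eq_range, Set.disjoint_left]
    rintro _ ⟨x, rfl⟩ ⟨u, -, h⟩
    exact Sum.inl_ne_inr h
  have hX : (Xset V r).Finite := Xset_eq_range V r ▸ Set.finite_range _
  rw [Set.ncard_union_eq hdisj hX (hM.image _), ncard_Xset,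
    Set.ncard_image_of_injective _ Sum.inl_injective]

lemma setOf_isA1_eq_range (V : Type*) (r : ℕ) :
    {x : GadgetV V r | isA1 x} = Set.range (Sum.inr ∘ Sum.inl) := by
  ext (u | x | x | x) <;> simp [isA1]

lemma finite_setOf_isA1 (V : Type*) (r : ℕ) : {x : GadgetV V r | isA1 x}.Finite :=
  setOf_isA1_eq_range V r ▸ Set.finite_range _

lemma ncard_setOf_isA1 (V : Type*) (r : ℕ) : {x : GadgetV V r | isA1 x}.ncard = r ^ 2 := by
  rw [setOf_isA1_eq_range, ← Set.image_univ,
    Set.ncard_image_of_injective _ (Sum.inr_injective.comp Sum.inl_injective),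
    Set.ncard_univ, Nat.card_eq_fintype_card, Fintype.card_fin]

lemma gadget_neighborSet_inl {V : Type*} (G' : SimpleGraph V) (r : ℕ) (v : V) :
    (gadget G' r).neighborSet (Sum.inl v) = {x | isA1 x} ∪ Sum.inl '' G'.neighborSet v := by
  ext (w | x | x | x)
  · simpa [gadget, isA1, isA2, isB, G'.adj_comm] using fun h => h.ne
  all_goals simp [gadget, isA1, isA2, isB]

lemma degIn_gadget_inl_add_one_le {V : Type*} (G' : SimpleGraph V) (r : ℕ) {M : Set V}
    (hM : M.Finite) {v : V} (hv : v ∈ M) :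
    degIn (gadget G' r) (Xset V r ∪ Sum.inl '' M) (Sum.inl v) + 1 ≤ r ^ 2 + M.ncard := by
  have hsub : (Xset V r ∪ Sum.inl '' M) ∩ (gadget G' r).neighborSet (Sum.inl v) ⊆
      {x | isA1 x} ∪ Sum.inl '' (M \ {v}) := by
    rw [gadget_neighborSet_inl]
    rintro _ ⟨hQ, hA1 | ⟨w, hw, rfl⟩⟩
    · exact Or.inl hA1
    refine Or.inr ⟨w, ⟨?_, hw.ne.symm⟩, rfl⟩
    rcases hQ with hX | ⟨u, hu, huw⟩
    · simp [Xset_eq_range] at hX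
    · exact Sum.inl_injective huw ▸ hu
  calc degIn (gadget G' r) (Xset V r ∪ Sum.inl '' M) (Sum.inl v) + 1
      ≤ ({x | isA1 x} ∪ Sum.inl '' (M \ {v})).ncard + 1 := by
        gcongr
        exact Set.ncard_le_ncard hsub ((finite_setOf_isA1 V r).union (hM.sdiff.image _))
    _ ≤ {x : GadgetV V r | isA1 x}.ncard + (Sum.inl '' (M \ {v}) : Set (GadgetV V r)).ncard
          + 1 := by
        gcongr
        exact Set.ncard_union_le _ _
    _ = r ^ 2 + M.ncard := by
        rw [ncard_setOf_isA1, Set.ncard_image_of_injective _ Sum.inl_injective, add_assoc,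
          Set.ncard_sdiff_singleton_add_one hv hM]

lemma lt_gammaR_mul {r m : ℕ} (hmr : m < r) :
    (r : ℚ) ^ 2 + m - 1 < gammaR r * (2 * r ^ 2 + r + m - 1) := by
  have hr : (1 : ℚ) ≤ r := by exact_mod_cast hmr.trans_le' (Nat.zero_le m)
  have hmr' : (m : ℚ) < r := by exact_mod_cast hmr
  rw [gammaR, div_mul_eq_mul_div, lt_div_iff₀ (by nlinarith)]
  -- the two sides differ by `(r - m) (r² + r)`
  nlinarith [mul_pos (sub_pos.2 hmr') (by positivity : (0 : ℚ) < r ^ 2 + r)]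

theorem stmt_11_general {V : Type*} [Fintype V] (G' : SimpleGraph V) (r : ℕ)
    (M : Set V) (hne : M.Nonempty) (hM : M.ncard < r) :
    ¬ IsQuasiClique (gadget G' r) (gammaR r) (Xset V r ∪ Sum.inl '' M) := by
  rintro ⟨-, hdeg⟩
  obtain ⟨v, hv⟩ := hne
  have hlow := hdeg _ (Or.inr ⟨v, hv, rfl⟩)
  rw [ncard_Xset_union_image_inl r M.toFinite, Int.ceil_le] at hlow
  have hup : (degIn (gadget G' r) (Xset V r ∪ Sum.inl '' M) (Sum.inl v) : ℚ) + 1 ≤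
      r ^ 2 + M.ncard := by
    exact_mod_cast degIn_gadget_inl_add_one_le G' r M.toFinite hv
  have hgap := lt_gammaR_mul hM
  push_cast at hlow
  linarith

/-- If `M ⊆ V'` is nonempty with `|M| < r`, then `X ∪ M` is not a
`γ_r`-quasi-clique in the gadget graph. -/
theorem stmt_11 {V : Type*} [Fintype V] (G' : SimpleGraph V) (r : ℕ) (hr : 0 < r)
    (M : Set V) (hne : M.Nonempty) (hM : M.ncard < r) :
    ¬ IsQuasiClique (gadget G' r) (gammaR r) (Xset V r ∪ Sum.inl '' M) :=
  stmt_11_general G' r M hne hM
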